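/- arXiv:2207.04604 — 5 statements merged into one kernel-verified Lean document; each statement's English description precedes it below -/
import Mathlib

section
/- BFV scalar decryption correctness: Let q and t be integers with 0 < t ≤ q, let Λ = ⌊q/t⌋ (integer division) and r = q − t·Λ. Then for all integers x and e satisfying 2·|t·e − r·x| < q, the nearest-integer rounding of the rational number t·(Λ·x + e)/q equals x. -/
/-!
Writing `q = t·Λ + r`, the numerator is `t·(Λ·x + e) = q·x + (t·e - r·x)`, so the rational
`t·(Λ·x + e)/q` lies within `|t·e - r·x|/q < 1/2` of the integer `x`, and hence rounds to it.
-/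

section Round

variable {α : Type*} [Field α] [LinearOrder α] [IsStrictOrderedRing α] [FloorRing α]

theorem round_eq_of_two_mul_abs_sub_lt {x : α} {n : ℤ} (h : 2 * |x - n| < 1) :
    round x = n := by
  rw [round_eq_iff, Set.mem_Ico]
  constructor <;> cases abs_lt.mp (by linarith : |x - n| < 1 / 2) <;> linarith

theorem round_intCast_div_eq_of_two_mul_abs_sub_lt {a d n : ℤ} (h : 2 * |a - d * n| < d) :
    round ((a : α) / d) = n := by
  have hd : (0 : α) < d := by exact_mod_cast (by linarith [abs_nonneg (a - d * n)] : 0 < d)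
  apply round_eq_of_two_mul_abs_sub_lt
  have hdist : |(a : α) / d - n| = |((a - d * n : ℤ) : α)| / d := by
    rw [← abs_of_pos hd, ← abs_div, abs_of_pos hd]
    push_cast
    field_simp
  rw [hdist, ← mul_div_assoc, div_lt_one hd, ← Int.cast_abs]
  exact_mod_cast h

end Round

theorem bfv_scalar_decrypt_correct_general (q t : ℤ)
    (Λ r : ℤ) (hr : r = q - t * Λ)
    (x e : ℤ) (hbound : 2 * |t * e - r * x| < q) :
    round ((t * (Λ * x + e) : ℚ) / (q : ℚ)) = x := by
  have hnum : t * (Λ * x + e) - q * x = t * e - r * x := by rw [hr]; ring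
  exact_mod_cast round_intCast_div_eq_of_two_mul_abs_sub_lt (α := ℚ) (hnum ▸ hbound)

/-- BFV scalar decryption correctness: with `Λ = q / t` (integer division) and
`r = q - t * Λ`, if `2 * |t*e - r*x| < q` then the nearest-integer rounding of
`t * (Λ*x + e) / q` equals `x`. -/
theorem bfv_scalar_decrypt_correct (q t : ℤ) (ht : 0 < t) (htq : t ≤ q)
    (Λ r : ℤ) (hΛ : Λ = q / t) (hr : r = q - t * Λ)
    (x e : ℤ) (hbound : 2 * |t * e - r * x| < q) :
    round ((t * (Λ * x + e) : ℚ) / (q : ℚ)) = x :=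
  bfv_scalar_decrypt_correct_general q t Λ r hr x e hbound
end

section
/- Decryption correctness under the paper's noise bound ‖e_ct‖ < q/(2t): Let q and t be positive integers with t dividing q and Λ = q/t. Then for all integers x and e with 2·t·|e| < q, the nearest-integer rounding of the rational number t·(Λ·x + e)/q equals x. In particular, a BFV ciphertext whose noise has all coefficients of absolute value less than q/(2t) is correctly decrypted. -/
/-!
Since `t * Λ = q`, the decrypted value `t * (Λ * x + e) / q` is `x + t * e / q`, and the noise
bound makes `|t * e / q| < 1 / 2`, so rounding removes the noise term.
-/

section

variable {K : Type*} [Field K] [LinearOrder K] [IsStrictOrderedRing K]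

theorem round_intCast_add_eq_of_abs_lt [FloorRing K] {r : K} (hr : |r| < 1 / 2) (n : ℤ) :
    round ((n : K) + r) = n := by
  have hr0 : round r = 0 := round_eq_zero_iff.mpr ⟨(abs_lt.mp hr).1.le, (abs_lt.mp hr).2⟩
  rw [round_intCast_add, hr0, add_zero]

theorem abs_mul_div_lt_half {t e q : K} (ht : 0 < t) (hbound : 2 * t * |e| < q) :
    |t * e / q| < 1 / 2 := by
  have hq : 0 < q := lt_of_le_of_lt (by positivity) hbound
  rw [abs_div, abs_mul, abs_of_pos ht, abs_of_pos hq, div_lt_iff₀ hq]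
  linarith

end

theorem mul_add_div_eq_add_div {K : Type*} [Field K] {t Λ q : K} (hq : q ≠ 0) (htΛ : t * Λ = q)
    (x e : K) : t * (Λ * x + e) / q = x + t * e / q := by
  rw [mul_add, ← mul_assoc, htΛ, add_div, mul_div_cancel_left₀ x hq]

theorem bfv_decrypt_correct_noise_bound_general (q t : ℤ) (ht : 0 < t)
    (hdvd : t ∣ q) (Λ : ℤ) (hΛ : Λ = q / t)
    (x e : ℤ) (hbound : 2 * t * |e| < q) :
    round ((t * (Λ * x + e) : ℚ) / (q : ℚ)) = x := by
  have htΛ : (t : ℚ) * Λ = q := by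
    rw [hΛ]
    exact_mod_cast Int.mul_ediv_cancel' hdvd
  have hq : (q : ℚ) ≠ 0 := by
    exact_mod_cast (lt_of_le_of_lt (by positivity) hbound : 0 < q).ne'
  have hnoise : |(t : ℚ) * e / q| < 1 / 2 :=
    abs_mul_div_lt_half (by exact_mod_cast ht) (by exact_mod_cast hbound)
  rw [mul_add_div_eq_add_div hq htΛ, round_intCast_add_eq_of_abs_lt hnoise]

/-- Decryption correctness under the noise bound `‖e_ct‖ < q/(2t)`: if `t` divides `q`,
`Λ = q / t`, and `2 * t * |e| < q`, then the nearest-integer rounding of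
`t * (Λ*x + e) / q` equals `x`. -/
theorem bfv_decrypt_correct_noise_bound (q t : ℤ) (ht : 0 < t) (hq : 0 < q)
    (hdvd : t ∣ q) (Λ : ℤ) (hΛ : Λ = q / t)
    (x e : ℤ) (hbound : 2 * t * |e| < q) :
    round ((t * (Λ * x + e) : ℚ) / (q : ℚ)) = x :=
  bfv_decrypt_correct_noise_bound_general q t ht hdvd Λ hΛ x e hbound
end

section
/- Correctness of T consecutive homomorphic additions (scalar form): Let q and t be positive integers with t dividing q and Λ = q/t. Let T be a positive integer, let e_1, …, e_T be integers with |e_i| ≤ C for every i, and let x be an integer. If 2·t·T·C < q, then the nearest-integer rounding of the rational number t·(Λ·x + Σ_{i=1}^T e_i)/q equals x. (This is the paper's claim that T homomorphic additions of ciphertexts with per-ciphertext noise bound C decrypt correctly as long as the accumulated noise T·C stays below q/(2t).) -/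
/-! Since `t Λ = q`, the decrypted value is `x + t E / q` with `E = ∑ i, e i`; the triangle
inequality gives `|t E| ≤ t T C < q / 2`, so the fractional term rounds to `0`. -/

section Decryption

variable {K : Type*} [Field K] [LinearOrder K] [IsStrictOrderedRing K] [FloorRing K]

theorem round_div_eq_zero_of_two_mul_abs_lt {a b : K} (h : 2 * |a| < b) : round (a / b) = 0 := by
  have hb : 0 < b := lt_of_le_of_lt (by positivity) h
  have habs : |a / b| < 1 / 2 := by
    rw [abs_div, abs_of_pos hb, div_lt_iff₀ hb]
    linarith
  rw [round_eq_zero_iff]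
  exact ⟨by linarith [neg_abs_le (a / b)], by linarith [le_abs_self (a / b)]⟩

theorem round_mul_scaled_add_div_eq {t Λ q E : K} (x : ℤ) (htΛ : t * Λ = q)
    (hE : 2 * |t * E| < q) : round (t * (Λ * x + E) / q) = x := by
  have hq : q ≠ 0 := (lt_of_le_of_lt (by positivity) hE).ne'
  have hsplit : t * (Λ * x + E) / q = x + t * E / q := by
    rw [mul_add, ← mul_assoc, htΛ, add_div, mul_div_cancel_left₀ _ hq]
  rw [hsplit, round_intCast_add, round_div_eq_zero_of_two_mul_abs_lt hE, add_zero]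

end Decryption

theorem abs_sum_le_card_mul {ι : Type*} [Fintype ι] (e : ι → ℤ) {C : ℤ} (hC : ∀ i, |e i| ≤ C) :
    |∑ i, e i| ≤ Fintype.card ι * C := by
  calc |∑ i, e i| ≤ ∑ i, |e i| := Finset.abs_sum_le_sum_abs _ _
    _ ≤ Fintype.card ι • C := Finset.sum_le_card_nsmul _ _ _ fun i _ => hC i
    _ = Fintype.card ι * C := nsmul_eq_mul _ _

theorem bfv_T_additions_correct_general (q t : ℤ) (ht : 0 < t)
    (hdvd : t ∣ q) (Λ : ℤ) (hΛ : Λ = q / t)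
    (T : ℕ) (e : Fin T → ℤ) (C : ℤ) (hC : ∀ i, |e i| ≤ C)
    (x : ℤ) (hbound : 2 * t * (T : ℤ) * C < q) :
    round ((t * (Λ * x + ∑ i, e i) : ℚ) / (q : ℚ)) = x := by
  have htΛ : t * Λ = q := hΛ ▸ Int.mul_ediv_cancel' hdvd
  have hnoise : 2 * |t * ∑ i, e i| < q := by
    have hsum := abs_sum_le_card_mul e hC
    rw [Fintype.card_fin] at hsum
    rw [abs_mul, abs_of_pos ht]
    nlinarith
  exact round_mul_scaled_add_div_eq x (by exact_mod_cast htΛ) (by exact_mod_cast hnoise)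

/-- Correctness of `T` consecutive homomorphic additions (scalar form): if `t ∣ q`,
`Λ = q / t`, each noise term satisfies `|e i| ≤ C`, and `2 * t * T * C < q`, then the
nearest-integer rounding of `t * (Λ*x + ∑ i, e i) / q` equals `x`. -/
theorem bfv_T_additions_correct (q t : ℤ) (ht : 0 < t) (hq : 0 < q)
    (hdvd : t ∣ q) (Λ : ℤ) (hΛ : Λ = q / t)
    (T : ℕ) (hT : 0 < T) (e : Fin T → ℤ) (C : ℤ) (hC : ∀ i, |e i| ≤ C)
    (x : ℤ) (hbound : 2 * t * (T : ℤ) * C < q) :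
    round ((t * (Λ * x + ∑ i, e i) : ℚ) / (q : ℚ)) = x :=
  bfv_T_additions_correct_general q t ht hdvd Λ hΛ T e C hC x hbound
end

section
/- Correctness of MBFV·Convert (the algebraic identity underlying Eq. (3) of the paper): Let U be a finite index set, s_k ∈ R_q for each k ∈ U, and s = Σ_{k∈U} s_k. Let (c_0, c_1) be a ciphertext with c_0 + s·c_1 = Λ·W + e_ct in R_q, and let the recipient's public key satisfy p_{0,i} = −(sk_i·p_{1,i} + e_cl) with sk_i, p_{1,i}, e_cl ∈ R_q. For each k ∈ U choose μ_k, e_{0,k}, e_{1,k} ∈ R_q and set h_{0,k} = s_k·c_1 + μ_k·p_{0,i} + e_{0,k} and h_{1,k} = μ_k·p_{1,i} + e_{1,k}. Then the converted ciphertext (c_0', c_1') = (c_0 + Σ_{k∈U} h_{0,k}, Σ_{k∈U} h_{1,k}) satisfies c_0' + sk_i·c_1' = Λ·W + e_ct + e_0 + sk_i·e_1 − μ·e_cl in R_q, where e_0 = Σ_{k∈U} e_{0,k}, e_1 = Σ_{k∈U} e_{1,k} and μ = Σ_{k∈U} μ_k. Hence the converted ciphertext is a valid encryption of W under the recipient's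 secret key sk_i with noise e_ct + e_Covt, where e_Covt = e_0 + sk_i·e_1 − μ·e_cl. -/
open Polynomial

/-- The ring `R_q = (ZMod q)[X] / (X^n + 1)`. -/
noncomputable abbrev Rq (q n : ℕ) : Type :=
  Polynomial (ZMod q) ⧸ Ideal.span {(Polynomial.X : Polynomial (ZMod q)) ^ n + 1}

/-- Correctness of MBFV·Convert: the converted ciphertext
`(c_0 + ∑ h_{0,k}, ∑ h_{1,k})` is a valid encryption of `W` under the recipient's
secret key `sk_i`, with noise `e_ct + e_0 + sk_i e_1 - μ e_cl`.
`Λ` is the image of `⌊q/t⌋` in `R_q`. -/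
theorem mbfv_convert_correct (q n t : ℕ) (hn : 0 < n) (ht : 0 < t) (htq : t < q)
    {ι : Type*} (U : Finset ι) (s : ι → Rq q n) (S : Rq q n) (hS : S = ∑ k ∈ U, s k)
    (c0 c1 W ect ski p1i ecl p0i c0' c1' : Rq q n)
    (μ e0 e1 h0 h1 : ι → Rq q n)
    (hct : c0 + S * c1 = ((q / t : ℕ) : Rq q n) * W + ect)
    (hp0i : p0i = -(ski * p1i + ecl))
    (hh0 : ∀ k ∈ U, h0 k = s k * c1 + μ k * p0i + e0 k)
    (hh1 : ∀ k ∈ U, h1 k = μ k * p1i + e1 k)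
    (hc0' : c0' = c0 + ∑ k ∈ U, h0 k)
    (hc1' : c1' = ∑ k ∈ U, h1 k) :
    c0' + ski * c1' =
      ((q / t : ℕ) : Rq q n) * W + ect +
        ((∑ k ∈ U, e0 k) + ski * (∑ k ∈ U, e1 k) - (∑ k ∈ U, μ k) * ecl) := by
  subst hc0' hc1' hS hp0i
  rw [Finset.sum_congr rfl hh0, Finset.sum_congr rfl hh1,
    Finset.sum_add_distrib, Finset.sum_add_distrib, Finset.sum_add_distrib,
    ← Finset.sum_mul, ← Finset.sum_mul, ← Finset.sum_mul]
  linear_combination hct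
end

section
/- End-to-end structural correctness of one encrypted aggregation round of D²-MHE: Work in R_q. Let the system secret key be s = Σ_{k∈U} s_k over a finite index set U, with collective public key pk = (p_0, p_1) satisfying p_0 = −(p_1·s + ē) where ē = Σ_{k∈U} e_k. Let J be a finite set of neighbors with weights a_j ∈ R_q, and for each j ∈ J let ct_j = (c_{0,j}, c_{1,j}) = (Λ·W_j + μ_j·p_0 + e_{0,j}, μ_j·p_1 + e_{1,j}) be the encryption of gradient W_j with randomness μ_j, e_{0,j}, e_{1,j} ∈ R_q. Form the weighted sum (C_0, C_1) = (Σ_{j∈J} a_j·c_{0,j}, Σ_{j∈J} a_j·c_{1,j}), and apply MBFV·Convert toward a recipient with key p_{0,i} = −(sk_i·p_{1,i} + e_cl): each k ∈ U computes h_{0,k} = s_k·C_1 + ν_k·p_{0,i} + f_{0,k} and h_{1,k} = ν_k·p_{1,i} + f_{1,k}, and the converted ciphertext is (C_0', C_1') = (C_0 + Σ_{k∈U} h_{0,k}, Σ_{k∈U} h_{1,k}). Then C_0' + sk_i·C_1' = Λ·(Σ_{j∈J} a_j·W_j) + E in R_q, where E = Σ_{j∈J} a_j·(e_{0,j} + s·e_{1,j}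 − μ_j·ē) + Σ_{k∈U} f_{0,k} + sk_i·(Σ_{k∈U} f_{1,k}) − (Σ_{k∈U} ν_k)·e_cl. Hence, up to the final rounding step, the recipient decrypts exactly the weighted average Σ_{j∈J} a_j·W_j of its neighbors' gradients. -/
open Polynomial

/-- End-to-end structural correctness of one encrypted aggregation round of D²-MHE:
encrypt each gradient `W_j` under the collective public key `(p_0, p_1)` with
`p_0 = -(p_1 S + ē)` (where `S = ∑ s_k`, `ē = ∑ e_k`), homomorphically form the
weighted sum, and apply MBFV·Convert toward the recipient's key
`p_{0,i} = -(sk_i p_{1,i} + e_cl)`.  The resulting ciphertext decrypts (up to rounding)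
to the weighted average `∑ a_j W_j` with the stated noise `E`.
`Λ` is the image of `⌊q/t⌋` in `R_q`. -/
theorem d2mhe_aggregation_round_correct (q n t : ℕ) (hn : 0 < n) (ht : 0 < t)
    (htq : t < q)
    {ι κ : Type*} (U : Finset ι) (J : Finset κ)
    (s e : ι → Rq q n) (S ebar : Rq q n)
    (hS : S = ∑ k ∈ U, s k) (hebar : ebar = ∑ k ∈ U, e k)
    (p0 p1 : Rq q n) (hp0 : p0 = -(p1 * S + ebar))
    (a W μ e0 e1 c0 c1 : κ → Rq q n)
    (hc0 : ∀ j ∈ J, c0 j = ((q / t : ℕ) : Rq q n) * W j + μ j * p0 + e0 j)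
    (hc1 : ∀ j ∈ J, c1 j = μ j * p1 + e1 j)
    (C0 C1 : Rq q n)
    (hC0 : C0 = ∑ j ∈ J, a j * c0 j) (hC1 : C1 = ∑ j ∈ J, a j * c1 j)
    (ski p1i ecl p0i : Rq q n) (hp0i : p0i = -(ski * p1i + ecl))
    (ν f0 f1 h0 h1 : ι → Rq q n)
    (hh0 : ∀ k ∈ U, h0 k = s k * C1 + ν k * p0i + f0 k)
    (hh1 : ∀ k ∈ U, h1 k = ν k * p1i + f1 k)
    (C0' C1' : Rq q n)
    (hC0' : C0' = C0 + ∑ k ∈ U, h0 k) (hC1' : C1' = ∑ k ∈ U, h1 k) :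
    C0' + ski * C1' =
      ((q / t : ℕ) : Rq q n) * (∑ j ∈ J, a j * W j) +
        ((∑ j ∈ J, a j * (e0 j + S * e1 j - μ j * ebar)) +
          (∑ k ∈ U, f0 k) + ski * (∑ k ∈ U, f1 k) - (∑ k ∈ U, ν k) * ecl) := by
  
  have hA : C0 = ((q / t : ℕ) : Rq q n) * (∑ j ∈ J, a j * W j)
      + (∑ j ∈ J, a j * μ j) * p0 + ∑ j ∈ J, a j * e0 j := by
    rw [hC0, show (∑ j ∈ J, a j * c0 j)
        = ∑ j ∈ J, (((q / t : ℕ) : Rq q n) * (a j * W j) + (a j * μ j) * p0 + a j * e0 j)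
      from Finset.sum_congr rfl fun j hj => by rw [hc0 j hj]; ring]
    simp [Finset.sum_add_distrib, Finset.mul_sum, Finset.sum_mul]
  have hB : C1 = (∑ j ∈ J, a j * μ j) * p1 + ∑ j ∈ J, a j * e1 j := by
    rw [hC1, show (∑ j ∈ J, a j * c1 j)
        = ∑ j ∈ J, ((a j * μ j) * p1 + a j * e1 j)
      from Finset.sum_congr rfl fun j hj => by rw [hc1 j hj]; ring]
    simp [Finset.sum_add_distrib, Finset.sum_mul]
  have hH0 : ∑ k ∈ U, h0 k = S * C1 + (∑ k ∈ U, ν k) * p0i + ∑ k ∈ U, f0 k := by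
    rw [show (∑ k ∈ U, h0 k) = ∑ k ∈ U, (s k * C1 + ν k * p0i + f0 k)
      from Finset.sum_congr rfl fun k hk => hh0 k hk, hS]
    simp [Finset.sum_add_distrib, Finset.sum_mul]
  have hH1 : C1' = (∑ k ∈ U, ν k) * p1i + ∑ k ∈ U, f1 k := by
    rw [hC1', show (∑ k ∈ U, h1 k) = ∑ k ∈ U, (ν k * p1i + f1 k)
      from Finset.sum_congr rfl fun k hk => hh1 k hk]
    simp [Finset.sum_add_distrib, Finset.sum_mul]
  have hE : ∑ j ∈ J, a j * (e0 j + S * e1 j - μ j * ebar)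
      = (∑ j ∈ J, a j * e0 j) + S * (∑ j ∈ J, a j * e1 j)
        - (∑ j ∈ J, a j * μ j) * ebar := by
    rw [show (∑ j ∈ J, a j * (e0 j + S * e1 j - μ j * ebar))
        = ∑ j ∈ J, (a j * e0 j + S * (a j * e1 j) - (a j * μ j) * ebar)
      from Finset.sum_congr rfl fun j hj => by ring]
    simp [Finset.sum_sub_distrib, Finset.sum_add_distrib, Finset.mul_sum, Finset.sum_mul]
  rw [hC0', hA, hH0, hB, hH1, hE, hp0, hp0i]
  ring
end
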